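/- For every integer g ≥ 1, the direct product Γ_g × ℤ⁴ of a genus-g surface group with ℤ⁴ satisfies def(Γ_g × ℤ⁴) = −3 − 6g. -/

import Mathlib

/-- `Γ` admits a finite presentation with `a` generators and `b` relators,
i.e. `Γ` is isomorphic to a free group on `a` generators modulo the normal closure
of `b` relators. -/
def IsPresentation (Γ : Type) [Group Γ] (a b : ℕ) : Prop :=
  ∃ r : Fin b → FreeGroup (Fin a), Nonempty (Γ ≃* PresentedGroup (Set.range r))

/-- `Γ` has deficiency `n`: some finite presentation realizes `a - b = n`, and every
finite presentation satisfies `a - b ≤ n`. -/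
def HasDeficiency (Γ : Type) [Group Γ] (n : ℤ) : Prop :=
  (∃ a b : ℕ, IsPresentation Γ a b ∧ (a : ℤ) - (b : ℤ) = n) ∧
    ∀ a b : ℕ, IsPresentation Γ a b → (a : ℤ) - (b : ℤ) ≤ n

open scoped commutatorElement in
/-- The surface relator `[x_1,y_1]⋯[x_g,y_g]` in the free group on `x_1,…,x_g,y_1,…,y_g`. -/
def surfaceRel (g : ℕ) : FreeGroup (Fin g ⊕ Fin g) :=
  (List.ofFn fun i : Fin g =>
    ⁅FreeGroup.of (Sum.inl i : Fin g ⊕ Fin g), FreeGroup.of (Sum.inr i)⁆).prod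

/-- The genus-`g` surface group `⟨x_1,y_1,…,x_g,y_g ∣ [x_1,y_1]⋯[x_g,y_g]⟩`. -/
abbrev SurfaceGroup (g : ℕ) : Type :=
  PresentedGroup ({surfaceRel g} : Set (FreeGroup (Fin g ⊕ Fin g)))

/-!
The product presentation of `Γ_g × ℤ⁴`, with generators `x_i, y_i, t_k`, the surface relator and
the commutators of each `x_i`, `y_i` with each `t_k` and of `t_k` with `t_l` (`k < l`), has
`2g + 4` generators and `8g + 7` relators.

Conversely, let `⟨a | r_1, …, r_b⟩` be any presentation of `G = Γ_g × ℤ⁴` and `T : ℚ^a → ℚ^b`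
the map evaluating characters of the free group on the relators, so that `ker T = Hom(G, ℚ)` has
dimension at most `2g + 4`. A bilinear form `β` on `ℚ^{2g+4}` defines, via the Heisenberg
extension, a function `Q_β` on the free group with `Q_β(uv) = Q_β(u) + Q_β(v) + β(ū, v̄)`; if the
vector `(Q_β(r_k))_k` lies in the image of `T`, correcting `Q_β` by a character gives such a
function on `G` itself. For the `8g + 7` forms dual to the relators above this is impossible
(evaluate on the commuting pairs and on the surface relation), so `b - rank T ≥ 8g + 7`, that is
`a - b ≤ (2g + 4) - (8g + 7)`.
-/

open scoped commutatorElement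

section

variable {R V : Type*} [CommRing R] [AddCommGroup V] [Module R V]

/-- The central extension of `V` by `R` with cocycle `β`. -/
def Heisenberg (_β : LinearMap.BilinForm R V) : Type _ := V × R

namespace Heisenberg

variable {β : LinearMap.BilinForm R V}

instance : Group (Heisenberg β) where
  mul x y := (x.1 + y.1, x.2 + y.2 + β x.1 y.1)
  one := (0, 0)
  inv x := (-x.1, -x.2 + β x.1 x.1)
  mul_assoc x y z := Prod.ext (add_assoc ..) <| by
    change x.2 + y.2 + β x.1 y.1 + z.2 + β (x.1 + y.1) z.1
      = x.2 + (y.2 + z.2 + β y.1 z.1) + β x.1 (y.1 + z.1)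
    simp only [map_add, LinearMap.add_apply]
    ring
  one_mul x := Prod.ext (zero_add _) <| by
    change 0 + x.2 + β 0 x.1 = x.2
    simp
  mul_one x := Prod.ext (add_zero _) <| by
    change x.2 + 0 + β x.1 0 = x.2
    simp
  inv_mul_cancel x := Prod.ext (neg_add_cancel _) <| by
    change -x.2 + β x.1 x.1 + x.2 + β (-x.1) x.1 = 0
    simp only [map_neg, LinearMap.neg_apply]
    ring

def fst (β : LinearMap.BilinForm R V) : Heisenberg β →* Multiplicative V where
  toFun x := Multiplicative.ofAdd x.1
  map_one' := rfl
  map_mul' _ _ := rfl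

end Heisenberg

variable {G H : Type*} [Group G] [Group H]

/-- `F` exhibits the 2-cocycle `(x, y) ↦ β (π x) (π y)` on `G` as a coboundary. -/
def IsTrivialization (β : LinearMap.BilinForm R V) (π : G →* Multiplicative V) (F : G → R) :
    Prop :=
  ∀ x y, F (x * y) = F x + F y + β (π x).toAdd (π y).toAdd

namespace IsTrivialization

variable {β β' : LinearMap.BilinForm R V} {π : G →* Multiplicative V} {F F' : G → R}

theorem apply_one (hF : IsTrivialization β π F) : F 1 = 0 := by
  simpa using hF 1 1

theorem apply_inv (hF : IsTrivialization β π F) (x : G) :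
    F x⁻¹ = -F x + β (π x).toAdd (π x).toAdd := by
  have h := hF x x⁻¹
  simp [hF.apply_one] at h
  linear_combination -h

theorem apply_commutatorElement (hF : IsTrivialization β π F) (x y : G) :
    F ⁅x, y⁆ = β (π x).toAdd (π y).toAdd - β (π y).toAdd (π x).toAdd := by
  simp only [commutatorElement_def, hF (x * y * x⁻¹), hF (x * y), hF x, hF.apply_inv, map_mul,
    map_inv, toAdd_mul, toAdd_inv, map_add, map_neg, LinearMap.add_apply, LinearMap.neg_apply]
  ring

theorem apply_comm_of_commute (hF : IsTrivialization β π F) {x y : G} (h : Commute x y) :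
    β (π x).toAdd (π y).toAdd = β (π y).toAdd (π x).toAdd := by
  have := hF.apply_commutatorElement x y
  rw [commutatorElement_eq_one_iff_commute.mpr h, hF.apply_one] at this
  linear_combination -this

theorem apply_list_prod (hF : IsTrivialization β π F) (l : List G) (hl : ∀ x ∈ l, π x = 1) :
    F l.prod = (l.map F).sum := by
  induction l with
  | nil => exact hF.apply_one
  | cons x l ih =>
    rw [List.prod_cons, hF, hl x List.mem_cons_self,
      ih fun y hy => hl y (List.mem_cons_of_mem _ hy)]
    simp

theorem add (hF : IsTrivialization β π F) (hF' : IsTrivialization β' π F') :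
    IsTrivialization (β + β') π (F + F') := fun x y => by
  simp only [Pi.add_apply, hF x y, hF' x y, LinearMap.add_apply]
  ring

theorem smul (hF : IsTrivialization β π F) (c : R) : IsTrivialization (c • β) π (c • F) :=
  fun x y => by
    simp only [Pi.smul_apply, hF x y, LinearMap.smul_apply, smul_eq_mul]
    ring

theorem sub_hom (hF : IsTrivialization β π F) (χ : G →* Multiplicative R) :
    IsTrivialization β π (fun x => F x - (χ x).toAdd) := fun x y => by
  simp only [hF x y, map_mul, toAdd_mul]
  ring

theorem eq_of_eqOn_closure (hF : IsTrivialization β π F) (hF' : IsTrivialization β π F')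
    {s : Set G} (hs : Subgroup.closure s = ⊤) (h : Set.EqOn F F' s) : F = F' := by
  let H : Subgroup G :=
    { carrier := {x | F x = F' x}
      one_mem' := by simp [hF.apply_one, hF'.apply_one]
      mul_mem' := fun {x y} hx hy => by simp_all [hF x y, hF' x y]
      inv_mem' := fun {x} hx => by simp_all [hF.apply_inv, hF'.apply_inv] }
  have : s ⊆ H := h
  funext x
  exact (Subgroup.closure_le H).mpr this (hs ▸ Subgroup.mem_top x)

def kernel (hF : IsTrivialization β π F) : Subgroup G where
  carrier := {x | π x = 1 ∧ F x = 0}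
  one_mem' := ⟨π.map_one, hF.apply_one⟩
  mul_mem' := fun {x y} ⟨hπx, hx⟩ ⟨hπy, hy⟩ => ⟨by simp [hπx, hπy], by simp [hF x y, hx, hy, hπx]⟩
  inv_mem' := fun {x} ⟨hπx, hx⟩ => ⟨by simp [hπx], by simp [hF.apply_inv, hx, hπx]⟩

instance (hF : IsTrivialization β π F) : hF.kernel.Normal where
  conj_mem n := fun ⟨hπn, hn⟩ w => by
    refine ⟨by simp [hπn], ?_⟩
    have h := hF w w⁻¹
    rw [mul_inv_cancel, hF.apply_one] at h
    rw [hF, hF, hn, hπn]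
    simp only [map_mul, hπn, mul_one, toAdd_one, map_zero]
    linear_combination -h

theorem exists_of_surjective {π : H →* Multiplicative V} {f : G →* H}
    (hf : Function.Surjective f) {F : G → R} (hF : IsTrivialization β (π.comp f) F)
    (hker : ∀ x ∈ f.ker, F x = 0) : ∃ F' : H → R, IsTrivialization β π F' := by
  have hfiber : ∀ x x', f x = f x' → F x' = F x := fun x x' h => by
    have hmem : x⁻¹ * x' ∈ f.ker := by simp [h]
    have hmem' : π (f (x⁻¹ * x')) = 1 := by rw [f.mem_ker.mp hmem, map_one]
    rw [← mul_inv_cancel_left x x', hF, hker _ hmem, MonoidHom.comp_apply, MonoidHom.comp_apply,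
      hmem']
    simp
  refine ⟨F ∘ Function.surjInv hf, fun y y' => ?_⟩
  have hs := Function.surjInv_eq hf
  have h := hfiber (Function.surjInv hf y * Function.surjInv hf y') (Function.surjInv hf (y * y'))
    (by rw [map_mul, hs, hs, hs])
  simp only [Function.comp_apply, h, hF _ _, MonoidHom.comp_apply, hs]

end IsTrivialization

variable {α : Type*}

def quadraticLift (β : LinearMap.BilinForm R V) (η : α → V) (w : FreeGroup α) : R :=
  (FreeGroup.lift (fun i => (show Heisenberg β from (η i, 0))) w).2

variable (β β' : LinearMap.BilinForm R V) (η : α → V)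

theorem isTrivialization_quadraticLift :
    IsTrivialization β (FreeGroup.lift fun i => Multiplicative.ofAdd (η i))
      (quadraticLift β η) := by
  have hfst : (Heisenberg.fst β).comp (FreeGroup.lift fun i => (show Heisenberg β from (η i, 0)))
      = FreeGroup.lift fun i => Multiplicative.ofAdd (η i) :=
    FreeGroup.ext_hom _ _ fun i => by
      rw [MonoidHom.comp_apply, FreeGroup.lift_apply_of, FreeGroup.lift_apply_of]; rfl
  intro x y
  rw [← hfst]
  exact congrArg Prod.snd (map_mul (FreeGroup.lift fun i => (show Heisenberg β from (η i, 0))) x y)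

@[simp]
theorem quadraticLift_of (i : α) : quadraticLift β η (FreeGroup.of i) = 0 := by
  rw [quadraticLift, FreeGroup.lift_apply_of]

theorem quadraticLift_add : quadraticLift (β + β') η = quadraticLift β η + quadraticLift β' η :=
  (isTrivialization_quadraticLift (β + β') η).eq_of_eqOn_closure
    ((isTrivialization_quadraticLift β η).add (isTrivialization_quadraticLift β' η))
    (FreeGroup.closure_range_of α) (by rintro _ ⟨i, rfl⟩; simp)

theorem quadraticLift_smul (c : R) : quadraticLift (c • β) η = c • quadraticLift β η :=
  (isTrivialization_quadraticLift (c • β) η).eq_of_eqOn_closure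
    ((isTrivialization_quadraticLift β η).smul c)
    (FreeGroup.closure_range_of α) (by rintro _ ⟨i, rfl⟩; simp)

end

section

open Module

variable (K : Type*) [Field K] {α κ : Type*}

def liftLinear : (α → K) →ₗ[K] (FreeGroup α → K) where
  toFun χ w := (FreeGroup.lift (fun i => Multiplicative.ofAdd (χ i)) w).toAdd
  map_add' χ χ' := by
    have : (FreeGroup.lift fun i => Multiplicative.ofAdd ((χ + χ') i))
        = (FreeGroup.lift fun i => Multiplicative.ofAdd (χ i))
          * FreeGroup.lift fun i => Multiplicative.ofAdd (χ' i) :=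
      FreeGroup.ext_hom _ _ fun i => by simp
    funext w
    exact congrArg Multiplicative.toAdd (DFunLike.congr_fun this w)
  map_smul' c χ := by
    have : (FreeGroup.lift fun i => Multiplicative.ofAdd ((c • χ) i))
        = (AddMonoidHom.mulLeft c).toMultiplicative.comp
          (FreeGroup.lift fun i => Multiplicative.ofAdd (χ i)) :=
      FreeGroup.ext_hom _ _ fun i => by simp
    funext w
    exact congrArg Multiplicative.toAdd (DFunLike.congr_fun this w)

/-- The transposed abelianized relation matrix; its kernel is `Hom(PresentedGroup (range r), K)`. -/
def evalRelators (r : κ → FreeGroup α) : (α → K) →ₗ[K] (κ → K) :=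
  LinearMap.funLeft K K r ∘ₗ liftLinear K

variable {K} {G : Type*} [Group G]

theorem finrank_ker_evalRelators_le {r : κ → FreeGroup α} (e : G ≃* PresentedGroup (Set.range r))
    {ι : Type*} [Fintype ι] {s : ι → G} (hs : Subgroup.closure (Set.range s) = ⊤) :
    finrank K (LinearMap.ker (evalRelators K r)) ≤ Fintype.card ι := by
  choose w hw using fun i => PresentedGroup.mk_surjective _ (e (s i))
  let L := (LinearMap.funLeft K K w ∘ₗ liftLinear K) ∘ₗ (LinearMap.ker (evalRelators K r)).subtype
  suffices hL : Function.Injective L by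
    simpa using LinearMap.finrank_le_finrank_of_injective hL
  rw [← LinearMap.ker_eq_bot, Submodule.eq_bot_iff]
  rintro ⟨χ, hχ⟩ hLχ
  have hrel : ∀ ρ ∈ Set.range r, FreeGroup.lift (fun i => Multiplicative.ofAdd (χ i)) ρ = 1 := by
    rintro _ ⟨k, rfl⟩
    exact congrArg Multiplicative.ofAdd (congrFun (LinearMap.mem_ker.mp hχ) k)
  have htriv : (PresentedGroup.toGroup hrel).comp (e : G →* PresentedGroup (Set.range r)) = 1 :=
    MonoidHom.eq_of_eqOn_dense hs <| by
      rintro _ ⟨i, rfl⟩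
      change PresentedGroup.toGroup hrel (e (s i)) = 1
      rw [← hw i]
      exact congrArg Multiplicative.ofAdd (congrFun (LinearMap.mem_ker.mp hLχ) i)
  ext j
  simpa using congrArg Multiplicative.toAdd
    (DFunLike.congr_fun htriv (e.symm (PresentedGroup.of j)))

variable {V D : Type*} [AddCommGroup V] [Module K V] [AddCommGroup D] [Module K D]

/-- If the relator values of `quadraticLift (Ω d)` are those of a character `χ`, then
`quadraticLift (Ω d) - χ` descends to a trivialization of `Ω d` on `G`. -/
theorem finrank_add_finrank_range_evalRelators_le [Fintype κ] {r : κ → FreeGroup α}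
    (e : G ≃* PresentedGroup (Set.range r)) (π : G →* Multiplicative V)
    (Ω : D →ₗ[K] LinearMap.BilinForm K V) (hΩ : ∀ d F, IsTrivialization (Ω d) π F → d = 0) :
    finrank K D + finrank K (LinearMap.range (evalRelators K r)) ≤ Fintype.card κ := by
  let f : FreeGroup α →* G :=
    (e.symm : PresentedGroup (Set.range r) →* G).comp (PresentedGroup.mk _)
  have hf : Function.Surjective f := e.symm.surjective.comp (PresentedGroup.mk_surjective _)
  let η : α → V := fun i => (π (f (FreeGroup.of i))).toAdd
  have hη : (FreeGroup.lift fun i => Multiplicative.ofAdd (η i)) = π.comp f :=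
    FreeGroup.ext_hom _ _ fun i => by simp [η]
  let Φ : D →ₗ[K] (κ → K) :=
    { toFun d k := quadraticLift (Ω d) η (r k)
      map_add' d d' := by funext k; simp [quadraticLift_add]
      map_smul' c d := by funext k; simp [quadraticLift_smul] }
  have hinj : Function.Injective ((LinearMap.range (evalRelators K r)).mkQ ∘ₗ Φ) := by
    rw [← LinearMap.ker_eq_bot, Submodule.eq_bot_iff]
    intro d hd
    obtain ⟨χ, hχ⟩ : Φ d ∈ LinearMap.range (evalRelators K r) := by simpa using hd
    have hF := hη ▸ (isTrivialization_quadraticLift (Ω d) η).sub_hom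
      (FreeGroup.lift fun i => Multiplicative.ofAdd (χ i))
    have hrel : Set.range r ⊆ hF.kernel := by
      rintro _ ⟨k, rfl⟩
      refine ⟨?_, ?_⟩
      · simp [f, PresentedGroup.one_of_mem (Set.mem_range_self k)]
      · exact sub_eq_zero.mpr (congrFun hχ k).symm
    obtain ⟨F, hF'⟩ := hF.exists_of_surjective hf fun x hx =>
      (Subgroup.normalClosure_le_normal hrel
        (PresentedGroup.mk_eq_one_iff.mp (by simpa [f] using hx))).2
    exact hΩ d F hF'
  have := LinearMap.finrank_le_finrank_of_injective hinj
  have := (LinearMap.range (evalRelators K r)).finrank_quotient_add_finrank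
  simp only [finrank_fintype_fun_eq_card] at this
  omega

end

theorem IsPresentation.sub_le_sub_finrank {K V D : Type*} [Field K] [AddCommGroup V] [Module K V]
    [AddCommGroup D] [Module K D] {G : Type} [Group G] {n m : ℕ} (hG : IsPresentation G n m)
    (π : G →* Multiplicative V) (Ω : D →ₗ[K] LinearMap.BilinForm K V)
    (hΩ : ∀ d F, IsTrivialization (Ω d) π F → d = 0) {a b : ℕ} (h : IsPresentation G a b) :
    (a : ℤ) - b ≤ n - Module.finrank K D := by
  obtain ⟨r', ⟨e'⟩⟩ := hG
  obtain ⟨r, ⟨e⟩⟩ := h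
  have hgen : Subgroup.closure (Set.range (e'.symm ∘ PresentedGroup.of)) = ⊤ := by
    have := MonoidHom.map_closure (e'.symm : PresentedGroup (Set.range r') →* G)
      (Set.range PresentedGroup.of)
    rw [PresentedGroup.closure_range_of,
      Subgroup.map_top_of_surjective _ e'.symm.surjective] at this
    rw [Set.range_comp]
    exact this.symm
  have hker := finrank_ker_evalRelators_le (K := K) e hgen
  have hrange := finrank_add_finrank_range_evalRelators_le e π Ω hΩ
  have := LinearMap.finrank_range_add_finrank_ker (evalRelators K r)
  simp only [Module.finrank_fintype_fun_eq_card, Fintype.card_fin] at hker hrange this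
  omega

namespace PresentedGroup

variable {α β ι κ : Type*}

theorem commute_of_commute_of {P : Type*} [Group P] {rels₁ : Set (FreeGroup α)}
    {rels₂ : Set (FreeGroup β)} {f : PresentedGroup rels₁ →* P} {g : PresentedGroup rels₂ →* P}
    (h : ∀ x y, Commute (f (of x)) (g (of y))) (a : PresentedGroup rels₁)
    (b : PresentedGroup rels₂) : Commute (f a) (g b) := by
  have hof : ∀ x b, Commute (f (of x)) (g b) := fun x b =>
    (Subgroup.mem_centralizer_singleton_iff.mp <|
      generated_by _ ((Subgroup.centralizer {f (of x)}).comap g)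
        (fun y => Subgroup.mem_centralizer_singleton_iff.mpr (h x y).eq.symm) b).symm
  have ha : f a ∈ Subgroup.centralizer (Set.range g) :=
    generated_by _ ((Subgroup.centralizer (Set.range g)).comap f)
      (fun x => Subgroup.mem_centralizer_iff.mpr fun _ ⟨b, hb⟩ => hb ▸ (hof x b).eq.symm) a
  exact (Subgroup.mem_centralizer_iff.mp ha (g b) ⟨b, rfl⟩).symm

variable (r : ι → FreeGroup α) (s : κ → FreeGroup β)

def prodRelators : ι ⊕ κ ⊕ α × β → FreeGroup (α ⊕ β)
  | .inl i => FreeGroup.map Sum.inl (r i)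
  | .inr (.inl k) => FreeGroup.map Sum.inr (s k)
  | .inr (.inr (x, y)) => ⁅(FreeGroup.of (.inl x) : FreeGroup (α ⊕ β)), FreeGroup.of (.inr y)⁆

def prodGen : α ⊕ β → PresentedGroup (Set.range r) × PresentedGroup (Set.range s) :=
  Sum.elim (fun x => (of x, 1)) (fun y => (1, of y))

def toProd : PresentedGroup (Set.range (prodRelators r s)) →*
    PresentedGroup (Set.range r) × PresentedGroup (Set.range s) :=
  toGroup (f := prodGen r s) <| by
    have hinl : (FreeGroup.lift (prodGen r s)).comp (FreeGroup.map Sum.inl)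
        = (MonoidHom.inl _ _).comp (mk (Set.range r)) :=
      FreeGroup.ext_hom _ _ fun _ => rfl
    have hinr : (FreeGroup.lift (prodGen r s)).comp (FreeGroup.map Sum.inr)
        = (MonoidHom.inr _ _).comp (mk (Set.range s)) :=
      FreeGroup.ext_hom _ _ fun _ => rfl
    rintro _ ⟨i | k | ⟨x, y⟩, rfl⟩
    · simp [prodRelators, ← MonoidHom.comp_apply, hinl, one_of_mem (Set.mem_range_self i)]
    · simp [prodRelators, ← MonoidHom.comp_apply, hinr, one_of_mem (Set.mem_range_self k)]
    · simp [prodRelators, prodGen, commutatorElement_eq_one_iff_commute, Commute, SemiconjBy]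

def ofProdLeft : PresentedGroup (Set.range r) →* PresentedGroup (Set.range (prodRelators r s)) :=
  PresentedGroup.map (FreeGroup.map Sum.inl) (by rintro _ ⟨i, rfl⟩; exact ⟨.inl i, rfl⟩)

def ofProdRight : PresentedGroup (Set.range s) →* PresentedGroup (Set.range (prodRelators r s)) :=
  PresentedGroup.map (FreeGroup.map Sum.inr) (by rintro _ ⟨k, rfl⟩; exact ⟨.inr (.inl k), rfl⟩)

def ofProd : PresentedGroup (Set.range r) × PresentedGroup (Set.range s) →*
    PresentedGroup (Set.range (prodRelators r s)) :=
  (ofProdLeft r s).noncommCoprod (ofProdRight r s) <| commute_of_commute_of fun x y =>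
    commutatorElement_eq_one_iff_commute.mp (one_of_mem ⟨.inr (.inr (x, y)), rfl⟩)

theorem toProd_comp_ofProdLeft : (toProd r s).comp (ofProdLeft r s) = MonoidHom.inl _ _ :=
  ext fun _ => rfl

theorem toProd_comp_ofProdRight : (toProd r s).comp (ofProdRight r s) = MonoidHom.inr _ _ :=
  ext fun _ => rfl

def prodEquiv : PresentedGroup (Set.range (prodRelators r s)) ≃*
    PresentedGroup (Set.range r) × PresentedGroup (Set.range s) :=
  MonoidHom.toMulEquiv (toProd r s) (ofProd r s)
    (ext <| Sum.rec (fun x => by simp [toProd, ofProd, prodGen]; rfl)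
      (fun y => by simp [toProd, ofProd, prodGen]; rfl))
    (MonoidHom.ext fun ⟨a, b⟩ => by
      rw [MonoidHom.comp_apply, ofProd, MonoidHom.noncommCoprod_apply, map_mul,
        ← MonoidHom.comp_apply, toProd_comp_ofProdLeft, ← MonoidHom.comp_apply,
        toProd_comp_ofProdRight]
      simp)

end PresentedGroup

namespace IsPresentation

theorem of_mulEquiv {Γ ι κ : Type} [Group Γ] [Fintype ι] [Fintype κ] {a b : ℕ}
    (hι : Fintype.card ι = a) (hκ : Fintype.card κ = b) (r : κ → FreeGroup ι)
    (e : Γ ≃* PresentedGroup (Set.range r)) : IsPresentation Γ a b := by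
  let eι := Fintype.equivFinOfCardEq hι
  let eκ := Fintype.equivFinOfCardEq hκ
  refine ⟨fun k => FreeGroup.freeGroupCongr eι (r (eκ.symm k)), ⟨e.trans ?_⟩⟩
  have hrange : Set.range (fun k => FreeGroup.freeGroupCongr eι (r (eκ.symm k)))
      = FreeGroup.freeGroupCongr eι '' Set.range r := by
    rw [← Set.range_comp, ← eκ.symm.surjective.range_comp]
    rfl
  rw [hrange]
  exact PresentedGroup.equivPresentedGroup _ eι

theorem prod {G H : Type} [Group G] [Group H] {a b c d : ℕ} (hG : IsPresentation G a b)
    (hH : IsPresentation H c d) : IsPresentation (G × H) (a + c) (b + d + a * c) := by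
  obtain ⟨r, ⟨e₁⟩⟩ := hG
  obtain ⟨s, ⟨e₂⟩⟩ := hH
  exact of_mulEquiv (by simp) (by simp; ring) (PresentedGroup.prodRelators r s)
    ((e₁.prodCongr e₂).trans (PresentedGroup.prodEquiv r s).symm)

end IsPresentation

theorem isPresentation_multiplicative_int : IsPresentation (Multiplicative ℤ) 1 0 := by
  let r : Empty → FreeGroup Unit := Empty.elim
  let gen : PresentedGroup (Set.range r) := PresentedGroup.of ()
  refine IsPresentation.of_mulEquiv Fintype.card_unit Fintype.card_empty r
    (MonoidHom.toMulEquiv (zpowersHom _ gen)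
      (PresentedGroup.toGroup (f := fun _ => Multiplicative.ofAdd 1) (by simp [r])) ?_ ?_)
  · exact MonoidHom.ext_mint (by simp [gen])
  · exact PresentedGroup.ext fun _ => by simp [gen]

theorem isPresentation_surfaceGroup (g : ℕ) : IsPresentation (SurfaceGroup g) (2 * g) 1 := by
  refine IsPresentation.of_mulEquiv (by simp; ring) Fintype.card_unit
    (fun _ : Unit => surfaceRel g) ?_
  rw [Set.range_const]

local notation "ℤ⁴" => Multiplicative ℤ × Multiplicative ℤ × Multiplicative ℤ × Multiplicative ℤ

theorem isPresentation_surfaceGroup_prod_int_pow_four (g : ℕ) :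
    IsPresentation (SurfaceGroup g × ℤ⁴) (2 * g + 4) (8 * g + 7) := by
  have hZ := isPresentation_multiplicative_int
  convert (isPresentation_surfaceGroup g).prod (hZ.prod (hZ.prod (hZ.prod hZ))) using 1
  ring

namespace SurfaceProdZ4

variable (g : ℕ)

abbrev Gen : Type := (Fin g ⊕ Fin g) ⊕ Fin 4

abbrev CupIndex : Type := ((Fin g ⊕ Fin g) × Fin 4) ⊕ {p : Fin 4 × Fin 4 // p.1 < p.2} ⊕ Unit

theorem card_cupIndex : Fintype.card (CupIndex g) = 8 * g + 7 := by
  have : Fintype.card {p : Fin 4 × Fin 4 // p.1 < p.2} = 6 := by decide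
  simp only [Fintype.card_sum, Fintype.card_prod, Fintype.card_fin, Fintype.card_unit, this]
  ring

def torusGen : Fin 4 → ℤ⁴ :=
  ![(.ofAdd 1, 1, 1, 1), (1, .ofAdd 1, 1, 1), (1, 1, .ofAdd 1, 1), (1, 1, 1, .ofAdd 1)]

def gen : Gen g → SurfaceGroup g × ℤ⁴ :=
  Sum.elim (fun s => (PresentedGroup.of s, 1)) (fun k => (1, torusGen k))

def abel : SurfaceGroup g × ℤ⁴ →* Multiplicative (Gen g → ℚ) :=
  let e : Gen g → Multiplicative (Gen g → ℚ) := fun j => .ofAdd (Pi.single j 1)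
  (PresentedGroup.toGroup (f := fun s => e (.inl s)) <| by
      rintro _ rfl
      simp only [surfaceRel, map_list_prod, List.map_ofFn]
      exact List.prod_eq_one fun _ h => by
        obtain ⟨i, rfl⟩ := List.mem_ofFn.mp h
        simp [commutatorElement_def]).coprod
    ((zpowersHom _ (e (.inr 0))).coprod ((zpowersHom _ (e (.inr 1))).coprod
      ((zpowersHom _ (e (.inr 2))).coprod (zpowersHom _ (e (.inr 3))))))

theorem abel_gen (j : Gen g) : abel g (gen g j) = .ofAdd (Pi.single j 1) := by
  rcases j with s | k
  · simp [abel, gen]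
  · fin_cases k <;> simp [abel, gen, torusGen]

theorem prod_commutator_gen_eq_one :
    (List.ofFn fun i : Fin g => ⁅gen g (.inl (.inl i)), gen g (.inl (.inr i))⁆).prod = 1 := by
  have h : PresentedGroup.mk {surfaceRel g} (List.ofFn fun i : Fin g =>
      ⁅FreeGroup.of (Sum.inl i : Fin g ⊕ Fin g), FreeGroup.of (Sum.inr i)⁆).prod = 1 :=
    PresentedGroup.one_of_mem (Set.mem_singleton _)
  have h' := congrArg (MonoidHom.inl (SurfaceGroup g) ℤ⁴) h
  simp only [map_list_prod, List.map_ofFn, Function.comp_def, map_commutatorElement, map_one] at h'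
  exact h'

/-- The form attached to `d` has matrix entry `d κ` at `(j, j') = (x_s, t_k)`, `(t_k, t_l)` and
`(x_i, y_i)` for `κ = (s, k)`, `(k, l)` and the surface class respectively, and `0` elsewhere: these
are the duals of the relators `[x_s, t_k]`, `[t_k, t_l]` and `∏ [x_i, y_i]`. -/
def cupSlot : Gen g → Gen g → Option (CupIndex g)
  | .inl s, .inr k => some (.inl (s, k))
  | .inr k, .inr l => if h : k < l then some (.inr (.inl ⟨(k, l), h⟩)) else none
  | .inl (.inl i), .inl (.inr i') => if i = i' then some (.inr (.inr ())) else none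
  | _, _ => none

def cupForm : (CupIndex g → ℚ) →ₗ[ℚ] LinearMap.BilinForm ℚ (Gen g → ℚ) :=
  Matrix.toBilin'.toLinearMap ∘ₗ
    { toFun d := Matrix.of fun j j' => (cupSlot g j j').elim 0 d
      map_add' d d' := by
        ext j j'
        simp only [Matrix.of_apply, Matrix.add_apply]
        cases cupSlot g j j' <;> simp
      map_smul' c d := by
        ext j j'
        simp only [Matrix.of_apply, Matrix.smul_apply, RingHom.id_apply]
        cases cupSlot g j j' <;> simp }

theorem cupForm_single (d : CupIndex g → ℚ) (j j' : Gen g) :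
    cupForm g d (Pi.single j 1) (Pi.single j' 1) = (cupSlot g j j').elim 0 d := by
  simp [cupForm]

variable {g}

theorem eq_zero_of_isTrivialization (hg : g ≠ 0) {d : CupIndex g → ℚ}
    {F : SurfaceGroup g × ℤ⁴ → ℚ} (hF : IsTrivialization (cupForm g d) (abel g) F) : d = 0 := by
  have hcomm : ∀ j j', Commute (gen g j) (gen g j') →
      (cupSlot g j j').elim 0 d = (cupSlot g j' j).elim 0 d := fun j j' h => by
    simpa [abel_gen, cupForm_single] using hF.apply_comm_of_commute h
  have hsurf : (g : ℚ) * d (.inr (.inr ())) = 0 := by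
    have hker : ∀ x ∈ List.ofFn fun i : Fin g => ⁅gen g (.inl (.inl i)), gen g (.inl (.inr i))⁆,
        abel g x = 1 := fun x hx => by
      obtain ⟨i, rfl⟩ := List.mem_ofFn.mp hx
      simp [commutatorElement_def]
    have := hF.apply_list_prod _ hker
    rw [prod_commutator_gen_eq_one, hF.apply_one, List.map_ofFn, List.sum_ofFn] at this
    simpa [hF.apply_commutatorElement, abel_gen, cupForm_single, cupSlot] using this.symm
  funext κ
  rcases κ with ⟨s, k⟩ | ⟨⟨k, l⟩, hkl⟩ | ⟨⟩
  · simpa [cupSlot] using hcomm (.inl s) (.inr k) (Prod.ext (by simp [gen]) (by simp [gen]))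
  · simpa [cupSlot, hkl, lt_asymm hkl] using
      hcomm (.inr k) (.inr l) (Prod.ext (by simp [gen]) (mul_comm _ _))
  · exact (mul_eq_zero.mp hsurf).resolve_left (Nat.cast_ne_zero.mpr hg)

end SurfaceProdZ4

/-- `def(Γ_g × ℤ⁴) = -3 - 6g` for every `g ≥ 1`. -/
theorem deficiency_surfaceGroup_prod_int_pow_four (g : ℕ) (hg : 1 ≤ g) :
    HasDeficiency
      (SurfaceGroup g ×
        (Multiplicative ℤ × Multiplicative ℤ × Multiplicative ℤ × Multiplicative ℤ))
      (-3 - 6 * (g : ℤ)) := by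
  have hpres := isPresentation_surfaceGroup_prod_int_pow_four g
  refine ⟨⟨2 * g + 4, 8 * g + 7, hpres, by push_cast; ring⟩, fun a b h => ?_⟩
  have := hpres.sub_le_sub_finrank (SurfaceProdZ4.abel g) (SurfaceProdZ4.cupForm g)
    (fun _ _ hF => SurfaceProdZ4.eq_zero_of_isTrivialization (by omega) hF) h
  rw [Module.finrank_fintype_fun_eq_card, SurfaceProdZ4.card_cupIndex] at this
  push_cast at this
  linarith
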